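/- arXiv:2605.13023 — 3 statements merged into one kernel-verified Lean document; each statement's English description precedes it below -/
import Mathlib

section
/- Suppose x, y : I → ℝ are smooth with y > 0 and satisfy, for all s ∈ I and all t ∈ ℝ, the identity e^{2t}(x'(s) + y'(s))³ + (x'(s) - y'(s))²(x'(s) + y'(s)) + 2 y(s)(x'(s) y''(s) - x''(s) y'(s)) = 0. Then x' + y' = 0 identically and x' y'' - x'' y' = 0 identically; in particular, if the curve is regular, it parametrizes a Euclidean straight line of slope -1. -/
/-- If smooth `x, y` with `y > 0` satisfy, for all `s ∈ I` and all `t`,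
`e^{2t}(x'+y')³ + (x'-y')²(x'+y') + 2y(x'y'' - x''y') = 0`, then `x' + y' = 0` and
`x'y'' - x''y' = 0` identically on `I`; in particular `x + y` is constant on `I`
(the curve is a Euclidean straight line of slope `-1`). -/
theorem stmt_7 (x y : ℝ → ℝ) (I : Set ℝ) (hI : IsOpen I) (hIc : IsPreconnected I)
    (hx : ContDiff ℝ (⊤ : ℕ∞) x) (hy : ContDiff ℝ (⊤ : ℕ∞) y) (hypos : ∀ s ∈ I, 0 < y s)
    (heq : ∀ s ∈ I, ∀ t : ℝ,
      Real.exp (2 * t) * (deriv x s + deriv y s) ^ 3 +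
        (deriv x s - deriv y s) ^ 2 * (deriv x s + deriv y s) +
        2 * y s * (deriv x s * deriv (deriv y) s - deriv (deriv x) s * deriv y s) = 0) :
    (∀ s ∈ I, deriv x s + deriv y s = 0) ∧
    (∀ s ∈ I, deriv x s * deriv (deriv y) s - deriv (deriv x) s * deriv y s = 0) ∧
    ∃ c : ℝ, ∀ s ∈ I, x s + y s = c := by
  have hA : ∀ s ∈ I, deriv x s + deriv y s = 0 := by
    intro s hs
    have h0 := heq s hs 0
    have h1 := heq s hs (Real.log 2 / 2)
    rw [show (2 : ℝ) * (Real.log 2 / 2) = Real.log 2 by ring,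
      Real.exp_log (by norm_num)] at h1
    rw [mul_zero, Real.exp_zero] at h0
    have hcube : (deriv x s + deriv y s) ^ 3 = 0 := by linarith
    exact pow_eq_zero_iff (n := 3) (by norm_num) |>.mp hcube
  have hW : ∀ s ∈ I, deriv x s * deriv (deriv y) s - deriv (deriv x) s * deriv y s = 0 := by
    intro s hs
    have h0 := heq s hs 0
    have hA0 := hA s hs
    have hy0 := hypos s hs
    rw [mul_zero, Real.exp_zero, hA0] at h0
    have : 2 * y s * (deriv x s * deriv (deriv y) s - deriv (deriv x) s * deriv y s) = 0 := by
      linarith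
    have h2y : (2 : ℝ) * y s ≠ 0 := by positivity
    exact (mul_eq_zero.mp this).resolve_left h2y
  refine ⟨hA, hW, ?_⟩
  -- x + y is constant on I
  set f : ℝ → ℝ := fun s => x s + y s with hf
  have hfd : Differentiable ℝ f := (hx.differentiable (by simp)).add (hy.differentiable (by simp))
  have hderiv : ∀ s ∈ I, deriv f s = 0 := by
    intro s hs
    have : deriv f s = deriv x s + deriv y s :=
      deriv_add (hx.differentiable (by simp) s) (hy.differentiable (by simp) s)
    rw [this, hA s hs]
  -- locally constant on I
  have hloc : ∀ a ∈ I, ∃ ε > 0, Metric.ball a ε ⊆ I ∧ ∀ b ∈ Metric.ball a ε, f b = f a := by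
    intro a ha
    obtain ⟨ε, hε, hball⟩ := Metric.isOpen_iff.mp hI a ha
    refine ⟨ε, hε, hball, ?_⟩
    intro b hb
    have hconv : Convex ℝ (Metric.ball a ε) := convex_ball a ε
    refine hconv.is_const_of_fderivWithin_eq_zero (hfd.differentiableOn) ?_ hb
      (Metric.mem_ball_self hε)
    intro z hz
    rw [fderivWithin_of_isOpen Metric.isOpen_ball hz]
    ext
    simp [fderiv_eq_smul_deriv, hderiv z (hball hz)]
  rcases Set.eq_empty_or_nonempty I with hIe | ⟨a, ha⟩
  · exact ⟨0, fun s hs => by simp [hIe] at hs⟩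
  refine ⟨f a, fun s hs => ?_⟩
  set u : Set ℝ := interior {z | f z = f a} with hu
  set v : Set ℝ := interior {z | f z ≠ f a} with hv
  have hmem : ∀ b ∈ I, (f b = f a → b ∈ u) ∧ (f b ≠ f a → b ∈ v) := by
    intro b hb
    obtain ⟨ε, hε, hball, hconst⟩ := hloc b hb
    constructor
    · intro hfb
      exact mem_interior.mpr ⟨Metric.ball b ε, fun z hz => by
        simp only [Set.mem_setOf_eq, hconst z hz, hfb], Metric.isOpen_ball,
        Metric.mem_ball_self hε⟩
    · intro hfb
      exact mem_interior.mpr ⟨Metric.ball b ε, fun z hz => by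
        simp only [Set.mem_setOf_eq, hconst z hz]; exact hfb, Metric.isOpen_ball,
        Metric.mem_ball_self hε⟩
  have hsub : I ⊆ u := by
    refine hIc.subset_left_of_subset_union (u := u) (v := v) isOpen_interior isOpen_interior ?_ ?_ ⟨a, ha, (hmem a ha).1 rfl⟩
    · exact Set.disjoint_of_subset interior_subset interior_subset
        (Set.disjoint_left.mpr fun z hz hz' => hz' hz)
    · intro b hb
      by_cases hfb : f b = f a
      · exact Or.inl ((hmem b hb).1 hfb)
      · exact Or.inr ((hmem b hb).2 hfb)
  have : s ∈ {z | f z = f a} := interior_subset (hsub hs)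
  exact this
end

section
/- Let γ(t,s) = (x(s), y(s) e^t) be a family of curves in the upper half-plane. If γ satisfies the curve shortening flow equation (the normal component of ∂_t γ equals κ N), then x'' y' - x' y'' = 0 identically; that is, the Euclidean curvature of the initial curve (x, y) vanishes, so the initial curve is a Euclidean straight line. -/
/-- Hyperbolic geodesic curvature of a curve `(x, y)` in the upper half-plane model. -/
noncomputable def hypCurv (x y : ℝ → ℝ) (s : ℝ) : ℝ :=
  y s * (deriv x s * deriv (deriv y) s - deriv (deriv x) s * deriv y s) /
      (((deriv x s) ^ 2 + (deriv y s) ^ 2) ^ ((3 : ℝ) / 2)) +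
    deriv x s / Real.sqrt ((deriv x s) ^ 2 + (deriv y s) ^ 2)

/-- Hyperbolic unit normal (90° rotation of the hyperbolic unit tangent). -/
noncomputable def hypNormal (x y : ℝ → ℝ) (s : ℝ) : ℝ × ℝ :=
  (y s / Real.sqrt ((deriv x s) ^ 2 + (deriv y s) ^ 2)) • (-(deriv y s), deriv x s)

/-- If the family `γ(t,s) = (x(s), y(s)eᵗ)` (evolution by vertical geodesic translations)
satisfies the CSF equation `⟨∂ₜγ, N⟩ = κ`, then `x''y' - x'y'' = 0` on `I`: the initial
curve has vanishing Euclidean curvature, i.e. it is a Euclidean straight line. -/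
theorem stmt_8 (x y : ℝ → ℝ) (I : Set ℝ)
    (hx : ContDiff ℝ (⊤ : ℕ∞) x) (hy : ContDiff ℝ (⊤ : ℕ∞) y) (hypos : ∀ s ∈ I, 0 < y s)
    (hreg : ∀ s ∈ I, (deriv x s) ^ 2 + (deriv y s) ^ 2 ≠ 0)
    (hflow : ∀ t : ℝ, ∀ s ∈ I,
      ((0 : ℝ) * (hypNormal x (fun s => y s * Real.exp t) s).1 +
          (y s * Real.exp t) * (hypNormal x (fun s => y s * Real.exp t) s).2) /
          (y s * Real.exp t) ^ 2 =
        hypCurv x (fun s => y s * Real.exp t) s) :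
    ∀ s ∈ I, deriv (deriv x) s * deriv y s - deriv x s * deriv (deriv y) s = 0 := by
  intro s hs
  have h := hflow 0 s hs
  simp only [Real.exp_zero, mul_one] at h
  unfold hypCurv hypNormal at h
  simp only [Prod.smul_fst, Prod.smul_snd, smul_eq_mul, zero_mul, zero_add] at h
  set Q : ℝ := (deriv x s) ^ 2 + (deriv y s) ^ 2 with hQdef
  have hQ : 0 < Q := lt_of_le_of_ne (by positivity) (Ne.symm (hreg s hs))
  have hsq : 0 < Real.sqrt Q := Real.sqrt_pos.mpr hQ
  have h32 : (0:ℝ) < Q ^ ((3:ℝ)/2) := Real.rpow_pos_of_pos hQ _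
  have hy0 : y s ≠ 0 := (hypos s hs).ne'
  have hLHS : (y s * (y s / Real.sqrt Q * deriv x s)) / (y s) ^ 2
      = deriv x s / Real.sqrt Q := by
    field_simp
  rw [hLHS] at h
  have hA : y s * (deriv x s * deriv (deriv y) s - deriv (deriv x) s * deriv y s)
      / Q ^ ((3:ℝ)/2) = 0 := by linarith
  have := (div_eq_zero_iff.mp hA).resolve_right h32.ne'
  have h0 : deriv x s * deriv (deriv y) s - deriv (deriv x) s * deriv y s = 0 := by
    rcases mul_eq_zero.mp this with h' | h'
    · exact absurd h' hy0
    · exact h'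
  linarith
end

section
/- Let a : J → ℝ and b : I → ℝ be smooth functions satisfying, for all t ∈ J and φ ∈ I, both a'(t) = (a(t)+b(φ)) b''(φ) - (1/2) b'(φ)² + 2(a(t)+b(φ))² - 2(a(t)+b(φ)) and (a(t)+b(φ))(b'''(φ) + 4b'(φ)) - 2b'(φ) = 0. If a is not constant, then b is constant. -/
/-- If smooth `a : J → ℝ`, `b : I → ℝ` satisfy
`a' = (a+b)b'' - ½ b'² + 2(a+b)² - 2(a+b)` and `(a+b)(b''' + 4b') - 2b' = 0`
for all `t ∈ J`, `φ ∈ I`, and `a` is not constant, then `b` is constant. -/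
theorem stmt_10 (a b : ℝ → ℝ) (J I : Set ℝ)
    (hJ : IsOpen J) (hJc : IsPreconnected J) (hI : IsOpen I) (hIc : IsPreconnected I)
    (ha : ContDiff ℝ (⊤ : ℕ∞) a) (hb : ContDiff ℝ (⊤ : ℕ∞) b)
    (h1 : ∀ t ∈ J, ∀ φ ∈ I,
      deriv a t = (a t + b φ) * deriv (deriv b) φ - (1 / 2) * (deriv b φ) ^ 2 +
        2 * (a t + b φ) ^ 2 - 2 * (a t + b φ))
    (h2 : ∀ t ∈ J, ∀ φ ∈ I,
      (a t + b φ) * (deriv (deriv (deriv b)) φ + 4 * deriv b φ) - 2 * deriv b φ = 0)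
    (hna : ¬ ∃ c : ℝ, ∀ t ∈ J, a t = c) :
    ∀ φ₁ ∈ I, ∀ φ₂ ∈ I, b φ₁ = b φ₂ := by
  -- J is nonempty, otherwise a is vacuously constant
  obtain ⟨t0, ht0⟩ : J.Nonempty := by
    rcases Set.eq_empty_or_nonempty J with h | h
    · exact absurd ⟨0, fun t ht => absurd ht (by simp [h])⟩ hna
    · exact h
  -- deriv b vanishes on I
  have hderiv : ∀ φ ∈ I, deriv b φ = 0 := by
    intro φ hφ
    by_contra hb'
    set X := deriv (deriv (deriv b)) φ + 4 * deriv b φ with hX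
    have hXne : X ≠ 0 := by
      intro h0
      have := h2 t0 ht0 φ hφ
      rw [← hX, h0] at this
      simp at this
      exact hb' this
    apply hna
    refine ⟨2 * deriv b φ / X - b φ, fun t ht => ?_⟩
    have h := h2 t ht φ hφ
    rw [← hX] at h
    field_simp
    linarith [h]
  -- b is constant on I
  intro φ₁ hφ₁ φ₂ hφ₂
  have hconv : Convex ℝ I := hIc.convex
  refine hconv.is_const_of_fderivWithin_eq_zero
    (hb.differentiable (by simp)).differentiableOn (fun x hx => ?_) hφ₁ hφ₂
  rw [fderivWithin_of_isOpen hI hx]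
  apply ContinuousLinearMap.ext_ring
  rw [fderiv_apply_one_eq_deriv, hderiv x hx]
  simp
end
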